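/- arXiv:2504.13543 — 2 statements merged into one kernel-verified Lean document; each statement's English description precedes it below -/
import Mathlib

section
/- If X = (x_n) is a determining sequence for K, then every f ∈ H_{K,X} has a unique representation f = Σ_{k∈ℕ} c_k K(·,x_k) with coefficient sequence c = (c_k) ∈ ℓ²(ℕ), and conversely every such series with ℓ² coefficients converges in H_{K,X}. -/
/-!
The synthesis map `S c = ∑ c m • κ m` is well defined and bounded on `ℓ²`, because for finitely
supported `c` one has `‖∑ c m • κ m‖² = ⟪c, T c⟫ ≤ ‖T‖ ‖c‖²`. Its adjoint is
`f ↦ (⟪κ j, f⟫)_j`, so `S† S = T`, and invertibility of `T` makes `T⁻¹ S†` a bounded left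
inverse `L` of `S`. This gives uniqueness of the coefficients (`c = L f`), and since `S L` is
continuous and fixes every `κ n`, it fixes the closed span, which gives existence.
-/

open scoped RealInnerProductSpace

/-- A continuous symmetric kernel is positive definite if all kernel matrices
at finite sets of pairwise distinct points are (symmetric) positive definite. -/
def IsPDKernel {E : Type*} [TopologicalSpace E] (K : E → E → ℝ) : Prop :=
  Continuous (fun p : E × E => K p.1 p.2) ∧ (∀ x y, K x y = K y x) ∧
  ∀ (n : ℕ) (x : Fin n → E), Function.Injective x →
    (Matrix.of fun i j => K (x i) (x j)).PosDef

/-- A family (v i) is a Riesz basis of the closed subspace S of a Hilbert space if it lies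
in S and is the image of the canonical orthonormal basis of ℓ² under a bounded invertible
operator onto S. -/
def IsRieszBasisOf {ι H : Type*} [DecidableEq ι] [NormedAddCommGroup H]
    [InnerProductSpace ℝ H] (S : Submodule ℝ H) (v : ι → H) : Prop :=
  (∀ i, v i ∈ S) ∧
  ∃ T : (lp (fun _ : ι => ℝ) 2) ≃L[ℝ] S, ∀ i, (T (lp.single 2 i 1) : H) = v i

open scoped lp

theorem summable_of_norm_sum_sq_le {ι E : Type*} [NormedAddCommGroup E] [CompleteSpace E]
    {f : ι → E} {g : ι → ℝ} (hg : Summable g) (C : ℝ)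
    (hfg : ∀ t : Finset ι, ‖∑ i ∈ t, f i‖ ^ 2 ≤ C * ∑ i ∈ t, g i) : Summable f := by
  rw [summable_iff_vanishing_norm]
  intro ε hε
  obtain ⟨s, hs⟩ := summable_iff_vanishing_norm.mp hg (ε ^ 2 / (|C| + 1)) (by positivity)
  refine ⟨s, fun t ht => pow_lt_pow_iff_left₀ (norm_nonneg _) hε.le two_ne_zero |>.mp ?_⟩
  calc ‖∑ i ∈ t, f i‖ ^ 2 ≤ C * ∑ i ∈ t, g i := hfg t
    _ ≤ |C| * ‖∑ i ∈ t, g i‖ := by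
      rw [Real.norm_eq_abs, ← abs_mul]; exact le_abs_self _
    _ ≤ (|C| + 1) * ‖∑ i ∈ t, g i‖ := by gcongr; linarith
    _ < (|C| + 1) * (ε ^ 2 / (|C| + 1)) := by gcongr; exact hs t ht
    _ = ε ^ 2 := by field_simp

section GramOperator

variable {ι H : Type*} [NormedAddCommGroup H] [InnerProductSpace ℝ H]

/-- The Gram matrix `(⟪κ j, κ m⟫)_{j,m}` acts on `ℓ²(ι)` as `T`, row by row. -/
def IsGramOperator (κ : ι → H) (T : ℓ²(ι, ℝ) →L[ℝ] ℓ²(ι, ℝ)) : Prop :=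
  ∀ c j, HasSum (fun m => ⟪κ j, κ m⟫ * c m) (T c j)

variable {κ : ι → H} {T : ℓ²(ι, ℝ) →L[ℝ] ℓ²(ι, ℝ)}

theorem IsGramOperator.apply_eq_inner_of_hasSum (hT : IsGramOperator κ T) {c : ℓ²(ι, ℝ)} {g : H}
    (hg : HasSum (fun m => c m • κ m) g) (j : ι) : T c j = ⟪κ j, g⟫ :=
  (hT c j).unique <| by
    simpa only [innerSL_apply_apply, real_inner_smul_right, mul_comm] using
      hg.mapL (innerSL ℝ (κ j))

theorem IsGramOperator.norm_sq_le_of_hasSum (hT : IsGramOperator κ T) {c : ℓ²(ι, ℝ)} {g : H}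
    (hg : HasSum (fun m => c m • κ m) g) : ‖g‖ ^ 2 ≤ ‖T‖ * ‖c‖ ^ 2 := by
  have hgg : HasSum (fun m => c m * T c m) ⟪g, g⟫ := by
    simpa only [innerSL_apply_apply, real_inner_smul_right, hT.apply_eq_inner_of_hasSum hg,
      real_inner_comm g] using hg.mapL (innerSL ℝ g)
  have hcT : HasSum (fun m => c m * T c m) ⟪c, T c⟫ := by
    simpa only [RCLike.inner_apply, conj_trivial, mul_comm] using lp.hasSum_inner (𝕜 := ℝ) c (T c)
  calc ‖g‖ ^ 2 = ⟪c, T c⟫ := by rw [← real_inner_self_eq_norm_sq, hgg.unique hcT]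
    _ ≤ ‖c‖ * ‖T c‖ := real_inner_le_norm _ _
    _ ≤ ‖c‖ * (‖T‖ * ‖c‖) := by gcongr; exact T.le_opNorm c
    _ = ‖T‖ * ‖c‖ ^ 2 := by ring

theorem IsGramOperator.summable [CompleteSpace H] (hT : IsGramOperator κ T) (c : ℓ²(ι, ℝ)) :
    Summable (fun m => c m • κ m) := by
  classical
  refine summable_of_norm_sum_sq_le (g := fun m => c m ^ 2) ?_ ‖T‖ fun t => ?_
  · simpa only [RCLike.inner_apply, conj_trivial, sq] using (lp.hasSum_inner (𝕜 := ℝ) c c).summable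
  · set ct : ℓ²(ι, ℝ) := ∑ m ∈ t, lp.single 2 m (c m)
    have hct : ∀ m, ct m = if m ∈ t then c m else 0 := by
      intro m; simp only [ct, lp.coeFn_sum, Finset.sum_apply, lp.coeFn_single, Finset.sum_pi_single]
    have hnorm : ‖ct‖ ^ 2 = ∑ m ∈ t, c m ^ 2 := by
      simpa only [ENNReal.toReal_ofNat, Real.rpow_two, Real.norm_eq_abs, sq_abs] using
        lp.norm_sum_single (p := 2) (by norm_num) c t
    have hsum : HasSum (fun m => ct m • κ m) (∑ m ∈ t, c m • κ m) := by
      have hcoeff : ∑ m ∈ t, c m • κ m = ∑ m ∈ t, ct m • κ m :=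
        Finset.sum_congr rfl fun m hm => by rw [hct, if_pos hm]
      rw [hcoeff]
      exact hasSum_sum_of_ne_finset_zero fun m hm => by rw [hct, if_neg hm, zero_smul]
    exact hnorm ▸ hT.norm_sq_le_of_hasSum hsum

theorem IsGramOperator.exists_hasSum [CompleteSpace H] (hT : IsGramOperator κ T) :
    ∃ S : ℓ²(ι, ℝ) →L[ℝ] H, ∀ c, HasSum (fun m => c m • κ m) (S c) := by
  have hsum := hT.summable
  let S : ℓ²(ι, ℝ) →ₗ[ℝ] H :=
    { toFun := fun c => ∑' m, c m • κ m
      map_add' := fun a b => by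
        simpa only [lp.coeFn_add, Pi.add_apply, add_smul] using
          ((hsum a).hasSum.add (hsum b).hasSum).tsum_eq
      map_smul' := fun r a => by
        simpa only [lp.coeFn_smul, Pi.smul_apply, smul_eq_mul, mul_smul, RingHom.id_apply] using
          ((hsum a).hasSum.const_smul r).tsum_eq }
  refine ⟨S.mkContinuous (√‖T‖) fun c => ?_, fun c => (hsum c).hasSum⟩
  refine (pow_le_pow_iff_left₀ (norm_nonneg _) (by positivity) two_ne_zero).mp ?_
  rw [mul_pow, Real.sq_sqrt (norm_nonneg _)]
  exact hT.norm_sq_le_of_hasSum (hsum c).hasSum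

variable {S : ℓ²(ι, ℝ) →L[ℝ] H}

theorem apply_single_of_forall_hasSum [DecidableEq ι]
    (hS : ∀ c, HasSum (fun m => c m • κ m) (S c)) (i : ι) : S (lp.single 2 i 1) = κ i := by
  have hsingle := hasSum_single (f := fun m => (lp.single 2 i 1 : ℓ²(ι, ℝ)) m • κ m) i
    fun m hm => by rw [lp.single_apply_ne (E := fun _ : ι => ℝ) 2 i _ hm, zero_smul]
  rw [lp.single_apply_self (E := fun _ : ι => ℝ), one_smul] at hsingle
  exact (hS _).unique hsingle

theorem adjoint_apply_of_forall_hasSum [CompleteSpace H]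
    (hS : ∀ c, HasSum (fun m => c m • κ m) (S c)) (f : H) (j : ι) :
    S.adjoint f j = ⟪κ j, f⟫ := by
  classical
  rw [← apply_single_of_forall_hasSum hS j, ← ContinuousLinearMap.adjoint_inner_right,
    lp.inner_single_left]
  simp

theorem IsGramOperator.adjoint_comp_eq [CompleteSpace H] (hT : IsGramOperator κ T)
    (hS : ∀ c, HasSum (fun m => c m • κ m) (S c)) : S.adjoint ∘L S = T :=
  ContinuousLinearMap.ext fun c => lp.ext <| funext fun j => by
    rw [ContinuousLinearMap.comp_apply, adjoint_apply_of_forall_hasSum hS,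
      hT.apply_eq_inner_of_hasSum (hS c)]

theorem IsGramOperator.exists_leftInverse [CompleteSpace H] (hT : IsGramOperator κ T)
    (hS : ∀ c, HasSum (fun m => c m • κ m) (S c)) (hTbij : Function.Bijective T) :
    ∃ L : H →L[ℝ] ℓ²(ι, ℝ), ∀ c, L (S c) = c := by
  let e := ContinuousLinearEquiv.ofBijective T (LinearMap.ker_eq_bot.mpr hTbij.1)
    (LinearMap.range_eq_top.mpr hTbij.2)
  refine ⟨(e.symm : ℓ²(ι, ℝ) →L[ℝ] ℓ²(ι, ℝ)) ∘L S.adjoint, fun c => ?_⟩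
  rw [ContinuousLinearMap.comp_apply, ← ContinuousLinearMap.comp_apply S.adjoint S,
    hT.adjoint_comp_eq hS]
  exact e.symm_apply_apply c

end GramOperator

theorem HasSum.mem_topologicalClosure {ι R M : Type*} [Semiring R] [TopologicalSpace M]
    [AddCommMonoid M] [Module R M] [ContinuousAdd M] [ContinuousConstSMul R M]
    {p : Submodule R M} {f : ι → M} {g : M} (hf : HasSum f g) (hp : ∀ i, f i ∈ p) :
    g ∈ p.topologicalClosure :=
  p.isClosed_topologicalClosure.mem_of_tendsto hf <| Filter.Eventually.of_forall fun _ =>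
    p.le_topologicalClosure <| p.sum_mem fun i _ => hp i

theorem stmt_9_general {d : ℕ}
    (K : EuclideanSpace ℝ (Fin d) → EuclideanSpace ℝ (Fin d) → ℝ)
    {H : Type*} [NormedAddCommGroup H] [InnerProductSpace ℝ H] [CompleteSpace H]
    (k : EuclideanSpace ℝ (Fin d) → H)
    (hk : ∀ x y, ⟪k x, k y⟫ = K x y)
    (x : ℕ → EuclideanSpace ℝ (Fin d))
    -- X is determining: the infinite kernel matrix A_{K,X} acts as a bounded
    -- bijective operator T on ℓ²(ℕ)
    (T : lp (fun _ : ℕ => ℝ) 2 →L[ℝ] lp (fun _ : ℕ => ℝ) 2)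
    (hTbij : Function.Bijective T)
    (hT : ∀ (c : lp (fun _ : ℕ => ℝ) 2) (j : ℕ),
      HasSum (fun m => K (x j) (x m) * c m) (T c j)) :
    (∀ f ∈ (Submodule.span ℝ (Set.range fun n => k (x n))).topologicalClosure,
      ∃! c : lp (fun _ : ℕ => ℝ) 2, HasSum (fun m => c m • k (x m)) f) ∧
    (∀ c : lp (fun _ : ℕ => ℝ) 2,
      ∃ f ∈ (Submodule.span ℝ (Set.range fun n => k (x n))).topologicalClosure,
        HasSum (fun m => c m • k (x m)) f) := by
  have hgram : IsGramOperator (fun n => k (x n)) T := fun c j => by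
    simpa only [hk] using hT c j
  obtain ⟨S, hS⟩ := hgram.exists_hasSum
  obtain ⟨L, hLS⟩ := hgram.exists_leftInverse hS hTbij
  have hSL : ∀ f ∈ (Submodule.span ℝ (Set.range fun n => k (x n))).topologicalClosure,
      S (L f) = f := by
    refine fun f hf => ContinuousLinearMap.eqOn_closure_span (f := S ∘L L) (g := .id ℝ H) ?_
      (by rwa [← Submodule.topologicalClosure_coe])
    rintro _ ⟨n, rfl⟩
    simp only [ContinuousLinearMap.comp_apply, ContinuousLinearMap.id_apply,
      ← apply_single_of_forall_hasSum hS n, hLS]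
  refine ⟨fun f hf => ⟨L f, by simpa only [hSL f hf] using hS (L f), fun c hc => ?_⟩,
    fun c => ⟨S c, (hS c).mem_topologicalClosure fun m => ?_, hS c⟩⟩
  · rw [hc.unique (hS c), hLS]
  · exact Submodule.smul_mem _ _ (Submodule.subset_span ⟨m, rfl⟩)

/-- For a determining sequence, every f ∈ H_{K,X} has a unique ℓ² coefficient sequence
with f = Σ c_k K(·,x_k), and conversely every ℓ² series converges to an element of H_{K,X}. -/
theorem stmt_9 {d : ℕ}
    (K : EuclideanSpace ℝ (Fin d) → EuclideanSpace ℝ (Fin d) → ℝ)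
    (hK : IsPDKernel K)
    {H : Type*} [NormedAddCommGroup H] [InnerProductSpace ℝ H] [CompleteSpace H]
    (k : EuclideanSpace ℝ (Fin d) → H)
    (hk : ∀ x y, ⟪k x, k y⟫ = K x y)
    (hdense : (Submodule.span ℝ (Set.range k)).topologicalClosure = ⊤)
    (x : ℕ → EuclideanSpace ℝ (Fin d)) (hx : Function.Injective x)
    -- X is determining: the infinite kernel matrix A_{K,X} acts as a bounded
    -- bijective operator T on ℓ²(ℕ)
    (T : lp (fun _ : ℕ => ℝ) 2 →L[ℝ] lp (fun _ : ℕ => ℝ) 2)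
    (hTbij : Function.Bijective T)
    (hT : ∀ (c : lp (fun _ : ℕ => ℝ) 2) (j : ℕ),
      HasSum (fun m => K (x j) (x m) * c m) (T c j)) :
    (∀ f ∈ (Submodule.span ℝ (Set.range fun n => k (x n))).topologicalClosure,
      ∃! c : lp (fun _ : ℕ => ℝ) 2, HasSum (fun m => c m • k (x m)) f) ∧
    (∀ c : lp (fun _ : ℕ => ℝ) 2,
      ∃ f ∈ (Submodule.span ℝ (Set.range fun n => k (x n))).topologicalClosure,
        HasSum (fun m => c m • k (x m)) f) :=
  stmt_9_general K k hk x T hTbij hT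
end

section
/- If X is a determining sequence for K and f = Σ_k c_k K(·,x_k) ∈ H_{K,X} with c ∈ ℓ², then the sample sequence f_X = (f(x_n))_{n∈ℕ} lies in ℓ²(ℕ), satisfies f_X = A_{K,X} c, and determines f uniquely via c = A_{K,X}^{-1} f_X. -/
open scoped RealInnerProductSpace

theorem HasSum.hasSum_inner_mul {ι H : Type*} [NormedAddCommGroup H] [InnerProductSpace ℝ H]
    {c : ι → ℝ} {v : ι → H} {g : H} (hg : HasSum (fun m => c m • v m) g) (w : H) :
    HasSum (fun m => ⟪w, v m⟫ * c m) ⟪g, w⟫ := by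
  have h := (innerSL ℝ w).hasSum hg
  simp only [innerSL_apply_apply, real_inner_smul_right] at h
  rw [real_inner_comm]
  simpa only [mul_comm] using h

theorem kernelMatrix_apply_eq_inner {ι E H : Type*} [NormedAddCommGroup H]
    [InnerProductSpace ℝ H] {K : E → E → ℝ} {k : E → H} (hk : ∀ x y, ⟪k x, k y⟫ = K x y)
    {x : ι → E} {T : lp (fun _ : ι => ℝ) 2 → lp (fun _ : ι => ℝ) 2}
    (hT : ∀ (c : lp (fun _ : ι => ℝ) 2) (j : ι), HasSum (fun m => K (x j) (x m) * c m) (T c j))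
    {c : lp (fun _ : ι => ℝ) 2} {g : H} (hg : HasSum (fun m => c m • k (x m)) g) (j : ι) :
    T c j = ⟪g, k (x j)⟫ :=
  (hT c j).unique (by simpa only [hk] using hg.hasSum_inner_mul (k (x j)))

theorem stmt_11_general {d : ℕ}
    (K : EuclideanSpace ℝ (Fin d) → EuclideanSpace ℝ (Fin d) → ℝ)
    {H : Type*} [NormedAddCommGroup H] [InnerProductSpace ℝ H]
    (k : EuclideanSpace ℝ (Fin d) → H)
    (hk : ∀ x y, ⟪k x, k y⟫ = K x y)
    (x : ℕ → EuclideanSpace ℝ (Fin d))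
    -- X is determining: the infinite kernel matrix A_{K,X} acts as a bounded
    -- bijective operator T on ℓ²(ℕ)
    (T : lp (fun _ : ℕ => ℝ) 2 →L[ℝ] lp (fun _ : ℕ => ℝ) 2)
    (hTbij : Function.Bijective T)
    (hT : ∀ (c : lp (fun _ : ℕ => ℝ) 2) (j : ℕ),
      HasSum (fun m => K (x j) (x m) * c m) (T c j))
    (c : lp (fun _ : ℕ => ℝ) 2) (f : H) (hf : HasSum (fun m => c m • k (x m)) f) :
    ∃ fX : lp (fun _ : ℕ => ℝ) 2,
      (∀ m, fX m = ⟪f, k (x m)⟫) ∧ fX = T c ∧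
      ∀ (g : H) (c' : lp (fun _ : ℕ => ℝ) 2), HasSum (fun m => c' m • k (x m)) g →
        (∀ m, ⟪g, k (x m)⟫ = ⟪f, k (x m)⟫) → g = f := by
  refine ⟨T c, kernelMatrix_apply_eq_inner hk hT hf, rfl, fun g c' hg hsame => ?_⟩
  have hc : c' = c := hTbij.injective <| lp.ext <| funext fun j => by
    rw [kernelMatrix_apply_eq_inner hk hT hg, kernelMatrix_apply_eq_inner hk hT hf, hsame j]
  exact (hc ▸ hg).unique hf

/-- For f = Σ c_k K(·,x_k) with c ∈ ℓ², the sample sequence f_X = (f(x_n)) lies in ℓ²,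
satisfies f_X = A_{K,X} c, and determines f uniquely (c = A_{K,X}⁻¹ f_X). -/
theorem stmt_11 {d : ℕ}
    (K : EuclideanSpace ℝ (Fin d) → EuclideanSpace ℝ (Fin d) → ℝ)
    (hK : IsPDKernel K)
    {H : Type*} [NormedAddCommGroup H] [InnerProductSpace ℝ H] [CompleteSpace H]
    (k : EuclideanSpace ℝ (Fin d) → H)
    (hk : ∀ x y, ⟪k x, k y⟫ = K x y)
    (hdense : (Submodule.span ℝ (Set.range k)).topologicalClosure = ⊤)
    (x : ℕ → EuclideanSpace ℝ (Fin d)) (hx : Function.Injective x)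
    -- X is determining: the infinite kernel matrix A_{K,X} acts as a bounded
    -- bijective operator T on ℓ²(ℕ)
    (T : lp (fun _ : ℕ => ℝ) 2 →L[ℝ] lp (fun _ : ℕ => ℝ) 2)
    (hTbij : Function.Bijective T)
    (hT : ∀ (c : lp (fun _ : ℕ => ℝ) 2) (j : ℕ),
      HasSum (fun m => K (x j) (x m) * c m) (T c j))
    (c : lp (fun _ : ℕ => ℝ) 2) (f : H) (hf : HasSum (fun m => c m • k (x m)) f) :
    ∃ fX : lp (fun _ : ℕ => ℝ) 2,
      (∀ m, fX m = ⟪f, k (x m)⟫) ∧ fX = T c ∧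
      ∀ (g : H) (c' : lp (fun _ : ℕ => ℝ) 2), HasSum (fun m => c' m • k (x m)) g →
        (∀ m, ⟪g, k (x m)⟫ = ⟪f, k (x m)⟫) → g = f :=
  stmt_11_general K k hk x T hTbij hT c f hf
end
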